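/- arXiv:2601.15104 — 3 statements merged into one kernel-verified Lean document; each statement's English description precedes it below -/
import Mathlib

section
/- If x ≡ x' are nonnegative reals and t ≥ 0, then there exists t' ≥ 0 such that x + t ≡ x' + t' and t ≡ t'. -/
def req (y z : ℝ) : Prop :=
  ⌊y⌋ = ⌊z⌋ ∧ (Int.fract y = 0 ↔ Int.fract z = 0)

lemma req_int_add (n : ℤ) (u v : ℝ) (h : req u v) : req ((n : ℝ) + u) ((n : ℝ) + v) := by
  obtain ⟨h1, h2⟩ := h
  exact ⟨by rw [Int.floor_intCast_add, Int.floor_intCast_add, h1],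
    by rw [Int.fract_intCast_add, Int.fract_intCast_add]; exact h2⟩

lemma req_Ioo (u v : ℝ) (hu : u ∈ Set.Ioo (0:ℝ) 1) (hv : v ∈ Set.Ioo (0:ℝ) 1) : req u v := by
  obtain ⟨hu0, hu1⟩ := hu
  obtain ⟨hv0, hv1⟩ := hv
  have fu : Int.fract u = u := Int.fract_eq_self.mpr ⟨le_of_lt hu0, hu1⟩
  have fv : Int.fract v = v := Int.fract_eq_self.mpr ⟨le_of_lt hv0, hv1⟩
  constructor
  · rw [Int.floor_eq_zero_iff.mpr ⟨le_of_lt hu0, hu1⟩,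
      Int.floor_eq_zero_iff.mpr ⟨le_of_lt hv0, hv1⟩]
  · rw [fu, fv]
    constructor <;> intro h <;> linarith

lemma req_Ioo2 (u v : ℝ) (hu : u ∈ Set.Ioo (1:ℝ) 2) (hv : v ∈ Set.Ioo (1:ℝ) 2) : req u v := by
  obtain ⟨hu0, hu1⟩ := hu
  obtain ⟨hv0, hv1⟩ := hv
  have flu : ⌊u⌋ = 1 := by rw [Int.floor_eq_iff]; push_cast; constructor <;> linarith
  have flv : ⌊v⌋ = 1 := by rw [Int.floor_eq_iff]; push_cast; constructor <;> linarith
  have fu : Int.fract u = u - 1 := by rw [Int.fract, flu]; push_cast; ring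
  have fv : Int.fract v = v - 1 := by rw [Int.fract, flv]; push_cast; ring
  refine ⟨by rw [flu, flv], ?_⟩
  rw [fu, fv]
  constructor <;> intro h <;> linarith

theorem one_step_density (x x' t : ℝ) (hx : 0 ≤ x) (hx' : 0 ≤ x') (ht : 0 ≤ t)
    (h : req x x') :
    ∃ t' : ℝ, 0 ≤ t' ∧ req (x + t) (x' + t') ∧ req t t' := by
  obtain ⟨hfl, hfr⟩ := h
  set a := Int.fract x with hadef
  set b := Int.fract x' with hbdef
  set c := Int.fract t with hcdef
  have ha0 : 0 ≤ a := Int.fract_nonneg x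
  have ha1 : a < 1 := Int.fract_lt_one x
  have hb0 : 0 ≤ b := Int.fract_nonneg x'
  have hb1 : b < 1 := Int.fract_lt_one x'
  have hc0 : 0 ≤ c := Int.fract_nonneg t
  have hc1 : c < 1 := Int.fract_lt_one t
  have hm0 : (0:ℝ) ≤ ((⌊t⌋ : ℤ) : ℝ) := by exact_mod_cast Int.floor_nonneg.mpr ht
  obtain ⟨n, hn⟩ : ∃ n : ℤ, x = (n : ℝ) + a := ⟨⌊x⌋, (Int.floor_add_fract x).symm⟩
  obtain ⟨n', hn', hnn'⟩ : ∃ n' : ℤ, x' = (n' : ℝ) + b ∧ n = n' := by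
    refine ⟨⌊x'⌋, (Int.floor_add_fract x').symm, ?_⟩
    have hnx : n = ⌊x⌋ := by
      rw [hn, Int.floor_intCast_add, Int.floor_eq_zero_iff.mpr ⟨ha0, ha1⟩, add_zero]
    rw [hnx, hfl]
  obtain ⟨m, hm, hm0'⟩ : ∃ m : ℤ, t = (m : ℝ) + c ∧ (0:ℝ) ≤ (m : ℝ) :=
    ⟨⌊t⌋, (Int.floor_add_fract t).symm, hm0⟩
  subst hnn'
  have key : ∀ c' : ℝ, 0 ≤ c' → req (a + c) (b + c') → req c c' →
      ∃ t' : ℝ, 0 ≤ t' ∧ req (x + t) (x' + t') ∧ req t t' := by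
    intro c' hc'0 h1 h2
    refine ⟨(m : ℝ) + c', by linarith, ?_, ?_⟩
    · have e1 : x + t = ((n + m : ℤ) : ℝ) + (a + c) := by rw [hn, hm]; push_cast; ring
      have e2 : x' + ((m : ℝ) + c') = ((n + m : ℤ) : ℝ) + (b + c') := by
        rw [hn']; push_cast; ring
      rw [e1, e2]
      exact req_int_add _ _ _ h1
    · rw [hm]
      exact req_int_add _ _ _ h2
  by_cases hc : c = 0
  · refine key 0 le_rfl ?_ ⟨by rw [hc], by rw [hc]⟩
    rw [hc, add_zero, add_zero]
    constructor
    · rcases eq_or_lt_of_le ha0 with h' | h'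
      · rw [← h', hfr.mp h'.symm]
      · rw [Int.floor_eq_zero_iff.mpr ⟨ha0, ha1⟩, Int.floor_eq_zero_iff.mpr ⟨hb0, hb1⟩]
    · rw [Int.fract_eq_self.mpr ⟨ha0, ha1⟩, Int.fract_eq_self.mpr ⟨hb0, hb1⟩]
      exact hfr
  · have hcpos : 0 < c := lt_of_le_of_ne hc0 (Ne.symm hc)
    rcases lt_trichotomy (a + c) 1 with h1 | h1 | h1
    · refine key ((1 - b) / 2) (by linarith) ?_ ?_
      · exact req_Ioo _ _ ⟨by linarith, by linarith⟩ ⟨by linarith, by linarith⟩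
      · exact req_Ioo _ _ ⟨hcpos, hc1⟩ ⟨by linarith, by linarith⟩
    · have hapos : 0 < a := by
        rcases eq_or_lt_of_le ha0 with h' | h'
        · exfalso; rw [← h'] at h1; linarith
        · exact h'
      have hbpos : 0 < b := by
        rcases eq_or_lt_of_le hb0 with h' | h'
        · exfalso; have : a = 0 := hfr.mpr h'.symm; linarith
        · exact h'
      refine key (1 - b) (by linarith) ?_ ?_
      · rw [h1, show b + (1 - b) = 1 by ring]; exact ⟨rfl, Iff.rfl⟩
      · exact req_Ioo _ _ ⟨hcpos, hc1⟩ ⟨by linarith, by linarith⟩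
    · have hapos : 0 < a := by linarith
      have hbpos : 0 < b := by
        rcases eq_or_lt_of_le hb0 with h' | h'
        · exfalso; have : a = 0 := hfr.mpr h'.symm; linarith
        · exact h'
      refine key (1 - b / 2) (by linarith) ?_ ?_
      · exact req_Ioo2 _ _ ⟨h1, by linarith⟩ ⟨by linarith, by linarith⟩
      · exact req_Ioo _ _ ⟨hcpos, hc1⟩ ⟨by linarith, by linarith⟩
end

section
/- Let x, x' be nonnegative reals with x ≡ x'. Then for every finite sequence t_1, …, t_m of nonnegative reals (m ≥ 1), there exists a sequence t'_1, …, t'_m of nonnegative reals such that: (i) x + t_1 + ⋯ + t_j ≡ x' + t'_1 + ⋯ + t'_j for all 1 ≤ j ≤ m, and (ii) t_i + t_{i+1} + ⋯ + t_j ≡ t'_i + t'_{i+1} + ⋯ + t'_j for all 1 ≤ i ≤ j ≤ m. -/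
lemma floor_int_add_of_Ico (n : ℤ) (r : ℝ) (h0 : 0 ≤ r) (h1 : r < 1) :
    ⌊(n : ℝ) + r⌋ = n := by
  rw [Int.floor_intCast_add, Int.floor_eq_zero_iff.mpr ⟨h0, h1⟩, add_zero]

lemma fract_int_add_of_Ico (n : ℤ) (r : ℝ) (h0 : 0 ≤ r) (h1 : r < 1) :
    Int.fract ((n : ℝ) + r) = r := by
  rw [Int.fract_intCast_add, Int.fract_eq_self.mpr ⟨h0, h1⟩]

lemma req_sub (p q : ℤ) (u v u' v' : ℝ)
    (hu : u ∈ Set.Ico (0:ℝ) 1) (hv : v ∈ Set.Ico (0:ℝ) 1)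
    (hu' : u' ∈ Set.Ico (0:ℝ) 1) (hv' : v' ∈ Set.Ico (0:ℝ) 1)
    (hle : u ≤ v ↔ u' ≤ v') (heq : u = v ↔ u' = v') :
    req (((p : ℝ) + v) - ((q : ℝ) + u)) (((p : ℝ) + v') - ((q : ℝ) + u')) := by
  obtain ⟨hu0, hu1⟩ := hu
  obtain ⟨hv0, hv1⟩ := hv
  obtain ⟨hu'0, hu'1⟩ := hu'
  obtain ⟨hv'0, hv'1⟩ := hv'
  by_cases hc : u ≤ v
  · have hc' : u' ≤ v' := hle.mp hc
    have e1 : ((p : ℝ) + v) - ((q : ℝ) + u) = ((p - q : ℤ) : ℝ) + (v - u) := by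
      push_cast; ring
    have e2 : ((p : ℝ) + v') - ((q : ℝ) + u') = ((p - q : ℤ) : ℝ) + (v' - u') := by
      push_cast; ring
    rw [e1, e2]
    constructor
    · rw [floor_int_add_of_Ico _ _ (by linarith) (by linarith),
        floor_int_add_of_Ico _ _ (by linarith) (by linarith)]
    · rw [fract_int_add_of_Ico _ _ (by linarith) (by linarith),
        fract_int_add_of_Ico _ _ (by linarith) (by linarith)]
      constructor
      · intro hz
        have : u = v := by linarith
        have := heq.mp this
        linarith
      · intro hz
        have : u' = v' := by linarith
        have := heq.mpr this
        linarith
  · push_neg at hc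
    have hc' : v' < u' := by
      by_contra hcon
      push_neg at hcon
      exact absurd (hle.mpr hcon) (not_le.mpr hc)
    have e1 : ((p : ℝ) + v) - ((q : ℝ) + u) = ((p - q - 1 : ℤ) : ℝ) + (1 + v - u) := by
      push_cast; ring
    have e2 : ((p : ℝ) + v') - ((q : ℝ) + u') = ((p - q - 1 : ℤ) : ℝ) + (1 + v' - u') := by
      push_cast; ring
    rw [e1, e2]
    constructor
    · rw [floor_int_add_of_Ico _ _ (by linarith) (by linarith),
        floor_int_add_of_Ico _ _ (by linarith) (by linarith)]
    · rw [fract_int_add_of_Ico _ _ (by linarith) (by linarith),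
        fract_int_add_of_Ico _ _ (by linarith) (by linarith)]
      constructor
      · intro hz; linarith
      · intro hz; linarith

lemma exists_mono_map (a b : ℝ) (ha : a ∈ Set.Ico (0:ℝ) 1) (hb : b ∈ Set.Ico (0:ℝ) 1)
    (hab : a = 0 ↔ b = 0) :
    ∃ f : ℝ → ℝ, f 0 = 0 ∧ f a = b ∧ (∀ u ∈ Set.Ico (0:ℝ) 1, f u ∈ Set.Ico (0:ℝ) 1) ∧
      StrictMonoOn f (Set.Ico (0:ℝ) 1) := by
  obtain ⟨ha0, ha1⟩ := ha
  obtain ⟨hb0, hb1⟩ := hb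
  by_cases hza : a = 0
  · refine ⟨id, rfl, ?_, fun u hu => hu, fun u _ v _ huv => huv⟩
    simp [hza, hab.mp hza]
  · have hbne : b ≠ 0 := fun hz => hza (hab.mpr hz)
    have hapos : 0 < a := lt_of_le_of_ne ha0 (Ne.symm hza)
    have hbpos : 0 < b := lt_of_le_of_ne hb0 (Ne.symm hbne)
    refine ⟨fun u => if u ≤ a then u * (b / a) else b + (u - a) * ((1 - b) / (1 - a)),
      ?_, ?_, ?_, ?_⟩
    · simp [ha0]
    · dsimp only
      rw [if_pos le_rfl]
      field_simp
    · intro u ⟨hu0, hu1⟩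
      dsimp only
      by_cases hua : u ≤ a
      · rw [if_pos hua]
        constructor
        · positivity
        · have : u * (b / a) ≤ a * (b / a) := by
            apply mul_le_mul_of_nonneg_right hua; positivity
          have : a * (b / a) = b := by field_simp
          calc u * (b / a) ≤ a * (b / a) := by
                apply mul_le_mul_of_nonneg_right hua; positivity
            _ = b := this
            _ < 1 := hb1
      · push_neg at hua
        rw [if_neg (not_le.mpr hua)]
        constructor
        · have : 0 ≤ (u - a) * ((1 - b) / (1 - a)) := by
            exact mul_nonneg (by linarith) (div_nonneg (by linarith) (by linarith))
          linarith
        · have h1 : (u - a) * ((1 - b) / (1 - a)) < (1 - a) * ((1 - b) / (1 - a)) := by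
            exact mul_lt_mul_of_pos_right (by linarith) (div_pos (by linarith) (by linarith))
          have hne : (1:ℝ) - a ≠ 0 := sub_ne_zero.mpr (by linarith)
          have h2 : (1 - a) * ((1 - b) / (1 - a)) = 1 - b := by
            field_simp
          linarith
    · intro u ⟨hu0, hu1⟩ v ⟨hv0, hv1⟩ huv
      dsimp only
      by_cases hua : u ≤ a
      · by_cases hva : v ≤ a
        · rw [if_pos hua, if_pos hva]
          exact mul_lt_mul_of_pos_right huv (div_pos hbpos hapos)
        · push_neg at hva
          rw [if_pos hua, if_neg (not_le.mpr hva)]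
          have h1 : u * (b / a) ≤ a * (b / a) := by
            apply mul_le_mul_of_nonneg_right hua; positivity
          have h2 : a * (b / a) = b := by field_simp
          have h3 : 0 < (v - a) * ((1 - b) / (1 - a)) := by
            exact mul_pos (by linarith) (div_pos (by linarith) (by linarith))
          linarith
      · push_neg at hua
        have hva : ¬ v ≤ a := by push_neg; linarith
        rw [if_neg (not_le.mpr hua), if_neg hva]
        have : (u - a) * ((1 - b) / (1 - a)) < (v - a) * ((1 - b) / (1 - a)) := by
          exact mul_lt_mul_of_pos_right (by linarith) (div_pos (by linarith) (by linarith))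
        linarith

lemma telescope_sum (g : ℕ → ℝ) (i j : ℕ) (hi : 1 ≤ i) (hij : i ≤ j) :
    ∑ k ∈ Finset.Icc i j, (g k - g (k - 1)) = g j - g (i - 1) := by
  induction j with
  | zero => omega
  | succ n ih =>
    rcases eq_or_lt_of_le hij with hcase | hcase
    · subst hcase
      simp
    · have hin : i ≤ n := by omega
      rw [Finset.sum_Icc_succ_top (by omega), ih hin]
      simp only [Nat.add_sub_cancel]
      ring

theorem density_lemma (x x' : ℝ) (hx : 0 ≤ x) (hx' : 0 ≤ x') (h : req x x')
    (m : ℕ) (hm : 1 ≤ m) (t : ℕ → ℝ) (ht : ∀ i, 0 ≤ t i) :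
    ∃ t' : ℕ → ℝ, (∀ i, 0 ≤ t' i) ∧
      (∀ j, 1 ≤ j → j ≤ m →
        req (x + ∑ i ∈ Finset.Icc 1 j, t i) (x' + ∑ i ∈ Finset.Icc 1 j, t' i)) ∧
      (∀ i j, 1 ≤ i → i ≤ j → j ≤ m →
        req (∑ k ∈ Finset.Icc i j, t k) (∑ k ∈ Finset.Icc i j, t' k)) := by
  obtain ⟨hfl, hfr⟩ := h
  have hfract_mem : ∀ y : ℝ, Int.fract y ∈ Set.Ico (0:ℝ) 1 :=
    fun y => ⟨Int.fract_nonneg y, Int.fract_lt_one y⟩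
  obtain ⟨f, hf0, hfab, hfmem, hfmono⟩ :=
    exists_mono_map (Int.fract x) (Int.fract x') (hfract_mem x) (hfract_mem x') hfr
  -- the partial sums
  set S : ℕ → ℝ := fun j => x + ∑ i ∈ Finset.Icc 1 j, t i with hS
  set M : ℝ → ℝ := fun y => (⌊y⌋ : ℝ) + f (Int.fract y) with hM
  set S' : ℕ → ℝ := fun j => M (S j) with hS'
  have hfmemy : ∀ y : ℝ, f (Int.fract y) ∈ Set.Ico (0:ℝ) 1 :=
    fun y => hfmem _ (hfract_mem y)
  have hfloorM : ∀ y : ℝ, ⌊M y⌋ = ⌊y⌋ := fun y =>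
    floor_int_add_of_Ico _ _ (hfmemy y).1 (hfmemy y).2
  have hfractM : ∀ y : ℝ, Int.fract (M y) = f (Int.fract y) := fun y =>
    fract_int_add_of_Ico _ _ (hfmemy y).1 (hfmemy y).2
  have hf_zero_iff : ∀ u ∈ Set.Ico (0:ℝ) 1, (f u = 0 ↔ u = 0) := by
    intro u hu
    constructor
    · intro hz
      exact hfmono.injOn hu (by constructor <;> norm_num) (by rw [hz, hf0])
    · intro hz; rw [hz, hf0]
  -- S' 0 = x'
  have hS0 : S 0 = x := by simp [hS]
  have hS'0 : S' 0 = x' := by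
    simp only [hS', hS0, hM]
    rw [hfl, hfab]
    exact Int.floor_add_fract x'
  -- M is monotone
  have hMmono : ∀ y z : ℝ, y ≤ z → M y ≤ M z := by
    intro y z hyz
    rcases lt_or_eq_of_le (Int.floor_mono hyz) with hlt | heq
    · have h1 : M y < (⌊y⌋ : ℝ) + 1 := by
        have := (hfmemy y).2; simp only [hM]; linarith
      have h2 : ((⌊y⌋ : ℝ) + 1) ≤ (⌊z⌋ : ℝ) := by exact_mod_cast hlt
      have h3 : (⌊z⌋ : ℝ) ≤ M z := by
        have := (hfmemy z).1; simp only [hM]; linarith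
      linarith
    · have hfr' : Int.fract y ≤ Int.fract z := by
        unfold Int.fract
        rw [heq]; linarith
      have := hfmono.monotoneOn (hfract_mem y) (hfract_mem z) hfr'
      simp only [hM, heq]
      linarith
  -- S is monotone in steps
  have hSstep : ∀ k : ℕ, 1 ≤ k → S k = S (k - 1) + t k := by
    intro k hk
    obtain ⟨n, rfl⟩ : ∃ n, k = n + 1 := ⟨k - 1, by omega⟩
    simp only [hS, Nat.add_sub_cancel]
    rw [Finset.sum_Icc_succ_top (by omega)]
    ring
  -- define t'
  set T : ℕ → ℝ := fun k => if 1 ≤ k ∧ k ≤ m then S' k - S' (k - 1) else 0 with hT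
  have hTnn : ∀ i, 0 ≤ T i := by
    intro i
    simp only [hT]
    split
    · rename_i hcond
      have hstep : S (i - 1) ≤ S i := by
        rw [hSstep i hcond.1]
        have := ht i; linarith
      have := hMmono _ _ hstep
      simp only [hS'] at *
      linarith
    · exact le_refl 0
  -- telescoping for T
  have hTsum : ∀ i j : ℕ, 1 ≤ i → i ≤ j → j ≤ m →
      ∑ k ∈ Finset.Icc i j, T k = S' j - S' (i - 1) := by
    intro i j hi hij hjm
    have : ∑ k ∈ Finset.Icc i j, T k = ∑ k ∈ Finset.Icc i j, (S' k - S' (k - 1)) := by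
      apply Finset.sum_congr rfl
      intro k hk
      rw [Finset.mem_Icc] at hk
      simp only [hT]
      rw [if_pos ⟨by omega, by omega⟩]
    rw [this, telescope_sum S' i j hi hij]
  -- telescoping for t
  have htsum : ∀ i j : ℕ, 1 ≤ i → i ≤ j → j ≤ m →
      ∑ k ∈ Finset.Icc i j, t k = S j - S (i - 1) := by
    intro i j hi hij hjm
    have : ∑ k ∈ Finset.Icc i j, t k = ∑ k ∈ Finset.Icc i j, (S k - S (k - 1)) := by
      apply Finset.sum_congr rfl
      intro k hk
      rw [Finset.mem_Icc] at hk
      rw [hSstep k (by omega)]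
      ring
    rw [this, telescope_sum S i j hi hij]
  refine ⟨T, hTnn, ?_, ?_⟩
  · intro j hj hjm
    have hsum : x' + ∑ i ∈ Finset.Icc 1 j, T i = S' j := by
      rw [hTsum 1 j le_rfl hj hjm]
      simp only [Nat.sub_self]
      rw [hS'0]; ring
    rw [hsum]
    have hsum2 : x + ∑ i ∈ Finset.Icc 1 j, t i = S j := rfl
    rw [hsum2]
    exact ⟨(hfloorM (S j)).symm, by
      rw [hfractM (S j)]
      exact (hf_zero_iff _ (hfract_mem (S j))).symm⟩
  · intro i j hi hij hjm
    rw [htsum i j hi hij hjm, hTsum i j hi hij hjm]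
    have e1 : S j - S (i - 1) =
        ((⌊S j⌋ : ℝ) + Int.fract (S j)) - ((⌊S (i-1)⌋ : ℝ) + Int.fract (S (i-1))) := by
      rw [Int.floor_add_fract, Int.floor_add_fract]
    have e2 : S' j - S' (i - 1) =
        ((⌊S j⌋ : ℝ) + f (Int.fract (S j))) - ((⌊S (i-1)⌋ : ℝ) + f (Int.fract (S (i-1)))) := by
      simp only [hS', hM]
    rw [e1, e2]
    exact req_sub _ _ _ _ _ _ (hfract_mem _) (hfract_mem _) (hfmemy _) (hfmemy _)
      (hfmono.le_iff_le (hfract_mem _) (hfract_mem _)).symm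
      ⟨fun he => by rw [he], fun he => hfmono.injOn (hfract_mem _) (hfract_mem _) he⟩
end

section
/- Let R be a reset function on timed words over an alphabet Σ, and let N^R be its associated normal form. Then for every timed word u: (i) N^R(u) has the same untimed projection (sequence of letters) as u, (ii) all delays of N^R(u) are half-integral, and (iii) the normal form is idempotent in the sense that N^R restricted to half-integral words is the identity, hence N^R(N^R(u)) = N^R(u) whenever R agrees on u and N^R(u) (in particular when R(v) ≡ R(N^R(v)) holds for all prefixes v of u). -/
def HalfIntegral (t : ℝ) : Prop := ∃ n : ℕ, t = n / 2

open Classical in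
noncomputable def hi (x : ℝ) : ℝ :=
  if Int.fract x = 0 then x else (⌊x⌋ : ℝ) + 1 / 2

def IsResetFn {α : Type*} (R : List (ℝ × α) → ℝ) : Prop :=
  (∀ u, 0 ≤ R u) ∧ R [] = 0 ∧
    ∀ (u : List (ℝ × α)) (t : ℝ) (a : α),
      R (u ++ [(t, a)]) = 0 ∨ R (u ++ [(t, a)]) = R u + t

noncomputable def normalForm {α : Type*} (R : List (ℝ × α) → ℝ)
    (w : List (ℝ × α)) : List (ℝ × α) :=
  w.mapIdx (fun i p => (hi (R (w.take i) + p.1) - hi (R (w.take i)), p.2))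

lemma hi_int_form (x : ℝ) : ∃ m : ℤ, hi x = m / 2 := by
  unfold hi
  split_ifs with h
  · exact ⟨2 * ⌊x⌋, by have := Int.self_sub_floor x; rw [h] at this; push_cast; linarith⟩
  · exact ⟨2 * ⌊x⌋ + 1, by push_cast; ring⟩

lemma hi_half_eq (x : ℝ) (h : ∃ m : ℤ, x = m / 2) : hi x = x := by
  obtain ⟨m, rfl⟩ := h
  unfold hi
  split_ifs with h
  · rfl
  · rcases Int.even_or_odd m with ⟨k, rfl⟩ | ⟨k, rfl⟩
    · exfalso; apply h
      have : ((k + k : ℤ) : ℝ) / 2 = (k : ℝ) := by push_cast; ring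
      rw [this, Int.fract_intCast]
    · have : ((2 * k + 1 : ℤ) : ℝ) / 2 = (k : ℝ) + 1 / 2 := by push_cast; ring
      rw [this]
      have hf : ⌊(k : ℝ) + 1 / 2⌋ = k := by
        rw [add_comm, Int.floor_add_intCast]
        norm_num
      rw [hf]

lemma hi_mono {x y : ℝ} (h : x ≤ y) : hi x ≤ hi y := by
  unfold hi
  split_ifs with hx hy hy
  · exact h
  · -- x integer, so x = ⌊x⌋ ≤ ⌊y⌋
    have hx' : (⌊x⌋ : ℝ) = x := by
      have := Int.self_sub_floor x; rw [hx] at this; linarith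
    have : ⌊x⌋ ≤ ⌊y⌋ := Int.floor_le_floor h
    have : (⌊x⌋ : ℝ) ≤ (⌊y⌋ : ℝ) := by exact_mod_cast this
    linarith
  · -- y integer, hi x = ⌊x⌋ + 1/2 ≤ y since ⌊x⌋ < x ≤ y, y int
    have hy' : (⌊y⌋ : ℝ) = y := by
      have := Int.self_sub_floor y; rw [hy] at this; linarith
    have hlt : (⌊x⌋ : ℝ) < x := by
      have := Int.self_sub_floor x
      have hpos : 0 < Int.fract x := lt_of_le_of_ne (Int.fract_nonneg x) (Ne.symm hx)
      linarith
    have : ⌊x⌋ + 1 ≤ ⌊y⌋ := by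
      have : (⌊x⌋ : ℝ) < ⌊y⌋ := by linarith
      exact_mod_cast this
    have : (⌊x⌋ : ℝ) + 1 ≤ ⌊y⌋ := by exact_mod_cast this
    linarith
  · have : ⌊x⌋ ≤ ⌊y⌋ := Int.floor_le_floor h
    have : (⌊x⌋ : ℝ) ≤ (⌊y⌋ : ℝ) := by exact_mod_cast this
    linarith

lemma halfIntegral_of_int {x : ℝ} (m : ℤ) (hm : x = m / 2) (hx : 0 ≤ x) :
    HalfIntegral x := by
  refine ⟨m.toNat, ?_⟩
  have hm0 : 0 ≤ m := by
    by_contra h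
    push_neg at h
    have : (m : ℝ) < 0 := by exact_mod_cast h
    nlinarith
  rw [hm]
  congr 1
  exact_mod_cast (Int.toNat_of_nonneg hm0).symm

lemma reset_prefix_half {α : Type*} (R : List (ℝ × α) → ℝ) (hR : IsResetFn R) :
    ∀ w : List (ℝ × α), (∀ p ∈ w, HalfIntegral p.1) → ∃ m : ℤ, R w = m / 2 := by
  intro w
  induction w using List.reverseRecOn with
  | nil => intro _; exact ⟨0, by rw [hR.2.1]; norm_num⟩
  | append_singleton l p ih =>
    intro h
    rcases hR.2.2 l p.1 p.2 with h0 | hs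
    · exact ⟨0, by simpa using h0⟩
    · obtain ⟨m, hm⟩ := ih (fun q hq => h q (List.mem_append_left _ hq))
      obtain ⟨n, hn⟩ := h p (by simp)
      exact ⟨m + n, by rw [hs, hm, hn]; push_cast; ring⟩

theorem normalForm_properties {α : Type*} (R : List (ℝ × α) → ℝ)
    (hR : IsResetFn R) (u : List (ℝ × α)) (hu : ∀ p ∈ u, 0 ≤ p.1) :
    -- (i) same untimed projection
    (normalForm R u).map Prod.snd = u.map Prod.snd ∧
    -- (ii) all delays of the normal form are half-integral
    (∀ p ∈ normalForm R u, HalfIntegral p.1) ∧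
    -- (iii) N^R is the identity on half-integral words ...
    (∀ w : List (ℝ × α), (∀ p ∈ w, HalfIntegral p.1) → normalForm R w = w) ∧
    -- ... hence idempotent whenever R agrees (up to ≡) on corresponding prefixes
    ((∀ k : ℕ, req (R (u.take k)) (R ((normalForm R u).take k))) →
      normalForm R (normalForm R u) = normalForm R u) := by
  have hlen : (normalForm R u).length = u.length := by
    simp [normalForm]
  have h2 : ∀ p ∈ normalForm R u, HalfIntegral p.1 := by
    intro p hp
    rw [List.mem_iff_getElem] at hp
    obtain ⟨i, hi', hpe⟩ := hp
    have hiu : i < u.length := by rwa [hlen] at hi'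
    simp only [normalForm, List.getElem_mapIdx] at hpe
    subst hpe
    simp only
    obtain ⟨m, hm⟩ := hi_int_form (R (u.take i) + (u[i]'hiu).1)
    obtain ⟨m', hm'⟩ := hi_int_form (R (u.take i))
    refine halfIntegral_of_int (m - m') (by rw [hm, hm']; push_cast; ring) ?_
    have : hi (R (u.take i)) ≤ hi (R (u.take i) + (u[i]'hiu).1) := by
      apply hi_mono
      have := hu (u[i]'hiu) (by apply List.getElem_mem)
      linarith
    linarith
  have h3 : ∀ w : List (ℝ × α), (∀ p ∈ w, HalfIntegral p.1) → normalForm R w = w := by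
    intro w hw
    apply List.ext_getElem
    · simp [normalForm]
    · intro i h1' h2'
      simp only [normalForm, List.getElem_mapIdx]
    -- goal: (hi (R (w.take i) + w[i].1) - hi (R (w.take i)), w[i].2) = w[i]
      obtain ⟨m, hm⟩ := reset_prefix_half R hR (w.take i)
        (fun q hq => hw q (List.mem_of_mem_take hq))
      obtain ⟨n, hn⟩ := hw (w[i]'h2') (by apply List.getElem_mem)
      have e1 : hi (R (w.take i)) = R (w.take i) := hi_half_eq _ ⟨m, hm⟩
      have e2 : hi (R (w.take i) + (w[i]'h2').1) = R (w.take i) + (w[i]'h2').1 := by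
        apply hi_half_eq
        exact ⟨m + n, by rw [hm, hn]; push_cast; ring⟩
      rw [e1, e2]
      simp
  refine ⟨?_, h2, h3, fun _ => h3 _ h2⟩
  apply List.ext_getElem
  · simp [normalForm]
  · intro i h1' h2'
    simp [normalForm, List.getElem_mapIdx]
end
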